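/- arXiv:2004.05216 — 2 statements merged into one kernel-verified Lean document; each statement's English description precedes it below -/
import Mathlib

section
/- For every function u : ℝ → ℝ that is twice weakly differentiable with u ∈ L²(ℝ) and u'' ∈ L²(ℝ), one has the Gabushin-type interpolation inequality ‖u'‖_{L^{10/3}(ℝ)} ≤ C ‖u‖_{L²(ℝ)}^{2/5} ‖u''‖_{L²(ℝ)}^{3/5} for some universal constant C > 0. -/
open MeasureTheory Set ENNReal NNReal

open Filter Topology

/-!
Write `A, B, C` for the `L²` norms of `u, u', u''`. First `u' ∈ L²`: on a half-line,
`(u u')' = u'² + u u''` with `u u'' ∈ L¹`, so if `∫ u'²` diverged then `u u' → ∞`, hence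
`u² → ∞`, contradicting `u ∈ L²`. Integration by parts gives `B² = -∫ u u'' ≤ A C`, and
`u'(x)² = -∫ₓ^∞ 2 u' u''` gives `‖u'‖_∞² ≤ 2 B C`. Finally
`‖u'‖_{10/3}^{10/3} ≤ ‖u'‖_∞^{4/3} B² ≤ (2 B C)^{2/3} B²`, and eliminating `B` with `B² ≤ A C`
leaves `2^{2/3} A^{4/3} C²`.
-/

section Interpolation

variable {α : Type*} [MeasurableSpace α] {μ : Measure α}

lemma lintegral_enorm_mul_le_eLpNorm_two_mul {𝕜 : Type*} [NormedRing 𝕜] {f g : α → 𝕜}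
    (hf : AEStronglyMeasurable f μ) (hg : AEStronglyMeasurable g μ) :
    ∫⁻ x, ‖f x * g x‖ₑ ∂μ ≤ eLpNorm f 2 μ * eLpNorm g 2 μ := by
  rw [← eLpNorm_one_eq_lintegral_enorm]
  simpa using eLpNorm_le_eLpNorm_mul_eLpNorm_of_nnnorm (p := 2) (q := 2) (r := 1) hf hg (· * ·) 1
    (.of_forall fun x => by simpa using nnnorm_mul_le (f x) (g x))

lemma eLpNorm_two_sq_eq_enorm_integral_mul_self {f : α → ℝ} (hf : MemLp f 2 μ) :
    eLpNorm f 2 μ ^ 2 = ‖∫ x, f x * f x ∂μ‖ₑ := by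
  have h := eLpNorm_nnreal_pow_eq_lintegral (f := f) (μ := μ) (p := 2) two_ne_zero
  simp only [NNReal.coe_ofNat, ENNReal.rpow_two, coe_ofNat] at h
  have hff : Integrable (fun x => f x * f x) μ := hf.integrable_mul hf
  rw [h, Real.enorm_of_nonneg (integral_nonneg fun x => mul_self_nonneg (f x)),
    ofReal_integral_eq_lintegral_ofReal hff (.of_forall fun x => mul_self_nonneg (f x))]
  refine lintegral_congr fun x => ?_
  rw [← Real.enorm_of_nonneg (mul_self_nonneg (f x)), enorm_mul, sq]

variable {ε : Type*} [TopologicalSpace ε] [ContinuousENorm ε]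

lemma eLpNormEssSup_sq_le {f : α → ε} {K : ℝ≥0∞} (h : ∀ᵐ x ∂μ, ‖f x‖ₑ ^ 2 ≤ K) :
    eLpNormEssSup f μ ^ 2 ≤ K := by
  have hsq : ∀ a : ℝ≥0∞, (a ^ 2) ^ (2⁻¹ : ℝ) = a := fun a => by
    simpa using ENNReal.pow_rpow_inv_natCast (x := a) two_ne_zero
  calc eLpNormEssSup f μ ^ 2 ≤ (K ^ (2⁻¹ : ℝ)) ^ 2 := by
        gcongr
        refine eLpNormEssSup_le_of_ae_enorm_bound (h.mono fun x hx => ?_)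
        rw [← hsq ‖f x‖ₑ]
        exact ENNReal.rpow_le_rpow hx (by norm_num)
    _ = K := by rw [← ENNReal.rpow_natCast, ← ENNReal.rpow_mul]; norm_num

lemma eLpNorm_rpow_le_eLpNormEssSup_rpow_mul {f : α → ε} (hf : AEStronglyMeasurable f μ)
    {p q : ℝ≥0} (hq : q ≠ 0) (hqp : q ≤ p) :
    eLpNorm f p μ ^ (p : ℝ) ≤ eLpNormEssSup f μ ^ ((p : ℝ) - q) * eLpNorm f q μ ^ (q : ℝ) := by
  rw [eLpNorm_nnreal_pow_eq_lintegral hq,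
    eLpNorm_nnreal_pow_eq_lintegral (hq.bot_lt.trans_le hqp).ne',
    ← lintegral_const_mul'' _ (hf.enorm.pow_const (q : ℝ))]
  refine lintegral_mono_ae ((enorm_ae_le_eLpNormEssSup f μ).mono fun x hx => ?_)
  have hqp' : (q : ℝ) ≤ p := hqp
  calc ‖f x‖ₑ ^ (p : ℝ) = ‖f x‖ₑ ^ ((p : ℝ) - q) * ‖f x‖ₑ ^ (q : ℝ) := by
        rw [← ENNReal.rpow_add_of_nonneg _ _ (sub_nonneg.2 hqp') q.coe_nonneg, sub_add_cancel]
    _ ≤ eLpNormEssSup f μ ^ ((p : ℝ) - q) * ‖f x‖ₑ ^ (q : ℝ) := by gcongr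

end Interpolation

lemma not_tendsto_atTop_of_integrable {f : ℝ → ℝ} (hf : Integrable f) :
    ¬ Tendsto f atTop atTop := by
  intro h
  obtain ⟨b, hb⟩ := eventually_atTop.1 (h.eventually (eventually_ge_atTop 1))
  have hsub : Ici b ⊆ {x | 1 ≤ ‖f x‖} := fun x hx => (hb x hx).trans (le_abs_self _)
  have := (measure_mono hsub).trans_lt (hf.measure_norm_ge_lt_top one_pos)
  simp at this

lemma tendsto_atTop_of_hasDerivAt_of_one_le {φ φ' : ℝ → ℝ} (hφ : ∀ x, HasDerivAt φ (φ' x) x)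
    (h : ∀ᶠ x in atTop, 1 ≤ φ' x) : Tendsto φ atTop atTop := by
  obtain ⟨b, hb⟩ := eventually_atTop.1 h
  have hgrowth : ∀ x, b ≤ x → 1 * (x - b) ≤ φ x - φ b := by
    refine fun x hx => (convex_Ici b).mul_sub_le_image_sub_of_le_deriv
      (fun y _ => (hφ y).continuousAt.continuousWithinAt)
      (fun y _ => (hφ y).differentiableAt.differentiableWithinAt) (fun y hy => ?_)
      b self_mem_Ici x hx hx
    rw [interior_Ici] at hy
    exact (hφ y).deriv ▸ hb y hy.le
  refine tendsto_atTop_mono' _ ((eventually_ge_atTop b).mono fun x hx => ?_)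
    (tendsto_atTop_add_const_right _ (φ b - b) tendsto_id)
  have := hgrowth x hx
  simp only [id]
  linarith

lemma integrable_of_integrableOn_Ioi_of_integrableOn_Ioi_comp_neg {E : Type*}
    [NormedAddCommGroup E] {f : ℝ → E} (hpos : IntegrableOn f (Ioi 0))
    (hneg : IntegrableOn (fun x => f (-x)) (Ioi 0)) : Integrable f := by
  have hIio : IntegrableOn f (Iio 0) := by
    refine (MeasurePreserving.integrableOn_comp_preimage (Measure.measurePreserving_neg volume)
      (Homeomorph.neg ℝ).measurableEmbedding).1 ?_
    simpa [Function.comp_def] using hneg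
  simpa using hIio.union ((integrableOn_Ici_iff_integrableOn_Ioi).2 hpos)

section SecondOrder

variable {u u' u'' : ℝ → ℝ}

lemma integrableOn_Ioi_deriv_sq (hu : ∀ x, HasDerivAt u (u' x) x)
    (hu' : ∀ x, HasDerivAt u' (u'' x) x) (hu2 : MemLp u 2) (hu''2 : MemLp u'' 2) :
    IntegrableOn (fun x => u' x ^ 2) (Ioi 0) := by
  have hu'c : Continuous u' := continuous_iff_continuousAt.2 fun x => (hu' x).continuousAt
  by_contra hnot
  have hF : Tendsto (fun b => ∫ x in (0:ℝ)..b, u' x ^ 2) atTop atTop := by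
    refine Monotone.tendsto_atTop_atTop (fun a b hab => ?_) fun K => ?_
    · rw [← intervalIntegral.integral_add_adjacent_intervals (f := fun x => u' x ^ 2)
        (a := 0) (b := a) (c := b)
        ((hu'c.pow 2).intervalIntegrable _ _) ((hu'c.pow 2).intervalIntegrable _ _)]
      exact le_add_of_nonneg_right (intervalIntegral.integral_nonneg hab fun x _ => sq_nonneg _)
    · by_contra! hbdd
      refine hnot (integrableOn_Ioi_of_intervalIntegral_norm_bounded K 0
        (fun i => (hu'c.pow 2).integrableOn_Ioc) tendsto_id (.of_forall fun b => ?_))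
      simpa only [id, norm_pow, Real.norm_eq_abs, sq_abs] using (hbdd b).le
  have hJ : Tendsto (fun b => ∫ x in (0:ℝ)..b, u x * u'' x) atTop
      (𝓝 (∫ x in Ioi 0, u x * u'' x)) :=
    intervalIntegral_tendsto_integral_Ioi 0 (hu2.integrable_mul hu''2).integrableOn tendsto_id
  have hmul : ∀ b, u b * u' b =
      u 0 * u' 0 + ((∫ x in (0:ℝ)..b, u' x ^ 2) + ∫ x in (0:ℝ)..b, u x * u'' x) := by
    intro b
    have hi₁ : IntervalIntegrable (fun x => u' x ^ 2) volume 0 b :=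
      (hu'c.pow 2).intervalIntegrable _ _
    have hi₂ : IntervalIntegrable (fun x => u x * u'' x) volume 0 b :=
      (hu2.integrable_mul hu''2).intervalIntegrable
    have hftc := intervalIntegral.integral_eq_sub_of_hasDerivAt
      (fun x _ => ((hu x).mul (hu' x)).congr_deriv (by ring)) (hi₁.add hi₂)
    rw [intervalIntegral.integral_add hi₁ hi₂, Pi.mul_apply, Pi.mul_apply] at hftc
    linarith
  have hg : Tendsto (fun b => u b * u' b) atTop atTop :=
    (tendsto_congr hmul).2 (tendsto_atTop_add_const_left _ _ (hF.atTop_add hJ))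
  have hsq : Tendsto (fun x => u x * u x) atTop atTop :=
    tendsto_atTop_of_hasDerivAt_of_one_le (fun x => (hu x).mul (hu x))
      ((hg.eventually (eventually_ge_atTop 1)).mono fun x hx => by linarith)
  exact not_tendsto_atTop_of_integrable (hu2.integrable_mul hu2) hsq

lemma memLp_two_deriv (hu : ∀ x, HasDerivAt u (u' x) x)
    (hu' : ∀ x, HasDerivAt u' (u'' x) x) (hu2 : MemLp u 2) (hu''2 : MemLp u'' 2) :
    MemLp u' 2 := by
  have hneg := integrableOn_Ioi_deriv_sq (u := fun x => u (-x)) (u' := fun x => -u' (-x))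
    (u'' := fun x => u'' (-x))
    (fun x => by simpa [Function.comp_def] using (hu (-x)).comp x (hasDerivAt_neg x))
    (fun x => by
      simpa [Function.comp_def, Pi.neg_def] using ((hu' (-x)).comp x (hasDerivAt_neg x)).neg)
    (hu2.comp_measurePreserving (Measure.measurePreserving_neg _))
    (hu''2.comp_measurePreserving (Measure.measurePreserving_neg _))
  refine (memLp_two_iff_integrable_sq
    (continuous_iff_continuousAt.2 fun x => (hu' x).continuousAt).aestronglyMeasurable).2 ?_
  exact integrable_of_integrableOn_Ioi_of_integrableOn_Ioi_comp_neg
    (integrableOn_Ioi_deriv_sq hu hu' hu2 hu''2) (by simpa using hneg)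

lemma eLpNorm_deriv_sq_le (hu : ∀ x, HasDerivAt u (u' x) x) (hu' : ∀ x, HasDerivAt u' (u'' x) x)
    (hu2 : MemLp u 2) (hu'2 : MemLp u' 2) (hu''2 : MemLp u'' 2) :
    eLpNorm u' 2 volume ^ 2 ≤ eLpNorm u 2 volume * eLpNorm u'' 2 volume := by
  have hparts : ∫ x, u x * u'' x = -∫ x, u' x * u' x :=
    integral_mul_deriv_eq_deriv_mul_of_integrable (fun x _ => hu x) (fun x _ => hu' x)
      (hu2.integrable_mul hu''2) (hu'2.integrable_mul hu'2) (hu2.integrable_mul hu'2)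
  calc eLpNorm u' 2 volume ^ 2 = ‖∫ x, u x * u'' x‖ₑ := by
        rw [eLpNorm_two_sq_eq_enorm_integral_mul_self hu'2, hparts, enorm_neg]
    _ ≤ ∫⁻ x, ‖u x * u'' x‖ₑ := enorm_integral_le_lintegral_enorm _
    _ ≤ eLpNorm u 2 volume * eLpNorm u'' 2 volume :=
        lintegral_enorm_mul_le_eLpNorm_two_mul hu2.1 hu''2.1

end SecondOrder

lemma enorm_sq_le_of_hasDerivAt {f f' : ℝ → ℝ} (hf : ∀ x, HasDerivAt f (f' x) x)
    (hf2 : MemLp f 2) (hf'2 : MemLp f' 2) (x : ℝ) :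
    ‖f x‖ₑ ^ 2 ≤ 2 * (eLpNorm f 2 volume * eLpNorm f' 2 volume) := by
  have hderiv : ∀ y, HasDerivAt (fun y => f y * f y) (2 * (f y * f' y)) y :=
    fun y => ((hf y).mul (hf y)).congr_deriv (by ring)
  have hff' : Integrable (fun y => f y * f' y) := hf2.integrable_mul hf'2
  have hint : Integrable (fun y => 2 * (f y * f' y)) := hff'.const_mul 2
  have hlim : Tendsto (fun y => f y * f y) atTop (𝓝 0) :=
    tendsto_zero_of_hasDerivAt_of_integrableOn_Ioi (a := 0) (fun y _ => hderiv y)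
      hint.integrableOn (hf2.integrable_mul hf2).integrableOn
  have hftc : ∫ y in Ioi x, 2 * (f y * f' y) = 0 - f x * f x :=
    integral_Ioi_of_hasDerivAt_of_tendsto' (fun y _ => hderiv y) hint.integrableOn hlim
  calc ‖f x‖ₑ ^ 2 = ‖∫ y in Ioi x, 2 * (f y * f' y)‖ₑ := by
        rw [hftc, zero_sub, enorm_neg, enorm_mul, sq]
    _ ≤ ∫⁻ y in Ioi x, ‖2 * (f y * f' y)‖ₑ := enorm_integral_le_lintegral_enorm _
    _ ≤ ∫⁻ y, ‖2 * (f y * f' y)‖ₑ := setLIntegral_le_lintegral _ _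
    _ = 2 * ∫⁻ y, ‖f y * f' y‖ₑ := by
        rw [← lintegral_const_mul' _ _ ofNat_ne_top]
        congr with y
        rw [enorm_mul, Real.enorm_of_nonneg zero_le_two, ofReal_ofNat]
    _ ≤ 2 * (eLpNorm f 2 volume * eLpNorm f' 2 volume) := by
        gcongr; exact lintegral_enorm_mul_le_eLpNorm_two_mul hf2.1 hf'2.1

lemma le_two_mul_rpow_mul_rpow_of_interpolation {A B C M L : ℝ≥0∞} (hB : B ^ 2 ≤ A * C)
    (hM : M ^ 2 ≤ 2 * (B * C)) (hL : L ^ (10 / 3 : ℝ) ≤ M ^ (4 / 3 : ℝ) * B ^ 2) :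
    L ≤ 2 * A ^ (2 / 5 : ℝ) * C ^ (3 / 5 : ℝ) := by
  have hL10 : L ^ 10 ≤ M ^ 4 * B ^ 6 :=
    calc L ^ 10 = (L ^ (10 / 3 : ℝ)) ^ 3 := by
          rw [← ENNReal.rpow_natCast (L ^ _), ← ENNReal.rpow_mul]; norm_num
      _ ≤ (M ^ (4 / 3 : ℝ) * B ^ 2) ^ 3 := by gcongr
      _ = M ^ 4 * B ^ 6 := by
          rw [mul_pow, ← ENNReal.rpow_natCast (M ^ _), ← ENNReal.rpow_mul, ← pow_mul]; norm_num
  have hM4 : M ^ 4 ≤ 4 * A * C ^ 3 :=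
    calc M ^ 4 = (M ^ 2) ^ 2 := by ring
      _ ≤ (2 * (B * C)) ^ 2 := by gcongr
      _ = 4 * B ^ 2 * C ^ 2 := by ring
      _ ≤ 4 * (A * C) * C ^ 2 := by gcongr
      _ = 4 * A * C ^ 3 := by ring
  refine (ENNReal.pow_le_pow_left_iff (n := 10) (by norm_num)).1 ?_
  calc L ^ 10 ≤ M ^ 4 * (B ^ 2) ^ 3 := by rwa [← pow_mul]
    _ ≤ 4 * A * C ^ 3 * (A * C) ^ 3 := by gcongr
    _ = 4 * A ^ 4 * C ^ 6 := by ring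
    _ ≤ 2 ^ 10 * A ^ 4 * C ^ 6 := by gcongr; norm_num
    _ = (2 * A ^ (2 / 5 : ℝ) * C ^ (3 / 5 : ℝ)) ^ 10 := by
        rw [mul_pow, mul_pow, ← ENNReal.rpow_natCast (A ^ _), ← ENNReal.rpow_natCast (C ^ _),
          ← ENNReal.rpow_mul, ← ENNReal.rpow_mul]
        norm_num

/-- Gabushin-type interpolation inequality on the real line:
`‖u'‖_{L^{10/3}} ≤ C ‖u‖_{L²}^{2/5} ‖u''‖_{L²}^{3/5}` for `u ∈ W^{2,2}(ℝ)`. -/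
theorem gabushin_inequality_real_line :
    ∃ C : ℝ≥0, 0 < C ∧ ∀ (u u' u'' : ℝ → ℝ),
      (∀ x, HasDerivAt u (u' x) x) →
      (∀ x, HasDerivAt u' (u'' x) x) →
      MemLp u 2 (volume : Measure ℝ) →
      MemLp u'' 2 (volume : Measure ℝ) →
      eLpNorm u' (10/3) (volume : Measure ℝ) ≤
        (C : ℝ≥0∞) * eLpNorm u 2 (volume : Measure ℝ) ^ ((2:ℝ)/5) *
          eLpNorm u'' 2 (volume : Measure ℝ) ^ ((3:ℝ)/5) := by
  refine ⟨2, two_pos, fun u u' u'' hu hu' hu2 hu''2 => ?_⟩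
  have hu'2 : MemLp u' 2 volume := memLp_two_deriv hu hu' hu2 hu''2
  have hsup : eLpNormEssSup u' volume ^ 2 ≤ 2 * (eLpNorm u' 2 volume * eLpNorm u'' 2 volume) :=
    eLpNormEssSup_sq_le (.of_forall (enorm_sq_le_of_hasDerivAt hu' hu'2 hu''2))
  have hinterp := eLpNorm_rpow_le_eLpNormEssSup_rpow_mul hu'2.1 (p := 10 / 3) (q := 2)
    two_ne_zero (NNReal.coe_le_coe.1 (by norm_num))
  norm_num at hinterp
  exact le_two_mul_rpow_mul_rpow_of_interpolation
    (eLpNorm_deriv_sq_le hu hu' hu2 hu'2 hu''2) hsup hinterp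
end

section
/- Smooth solutions of the linear equation u_t + u_{xxxx} + β u_{xxx} = 0 on Q_{3/4} satisfy the Caccioppoli-type estimate ‖u_{xx}‖_{L²(Q_{5/8})} ≤ C_β (‖u‖_{L²(Q_{3/4})} + ‖u_x‖_{L²(Q_{3/4})}). -/
open MeasureTheory Set

/-- The biparabolic cylinder `Q_r = (-r,r) × (-r⁴, 0]`, centred at the origin. -/
def biCyl (x₀ t₀ r : ℝ) : Set (ℝ × ℝ) :=
  Ioo (x₀ - r) (x₀ + r) ×ˢ Ioc (t₀ - r^4) t₀

open Filter intervalIntegral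
open scoped Manifold ContDiff

noncomputable section CaccAux

private lemma exists_cutoff (s t : Set ℝ) (hs : IsClosed s) (ht : IsClosed t)
    (hd : Disjoint s t) :
    ∃ f : ℝ → ℝ, ContDiff ℝ ∞ f ∧ EqOn f 0 s ∧ EqOn f 1 t ∧ ∀ x, f x ∈ Icc (0:ℝ) 1 := by
  obtain ⟨f, h0, h1, h01⟩ := exists_contMDiffMap_zero_one_of_isClosed (𝓘(ℝ, ℝ)) hs ht hd
  exact ⟨f, contMDiff_iff_contDiff.mp f.contMDiff, h0, h1, h01⟩

/-- partial derivative in the first variable -/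
private def pdx (f : ℝ × ℝ → ℝ) : ℝ × ℝ → ℝ := fun p => fderiv ℝ f p (1, 0)

private def pdxn (u : ℝ × ℝ → ℝ) : ℕ → ℝ × ℝ → ℝ
  | 0 => u
  | k + 1 => pdx (pdxn u k)

private def pdt (f : ℝ × ℝ → ℝ) : ℝ × ℝ → ℝ := fun p => fderiv ℝ f p (0, 1)

private lemma contDiff_pdx {f : ℝ × ℝ → ℝ} (hf : ContDiff ℝ ∞ f) : ContDiff ℝ ∞ (pdx f) :=
  (hf.fderiv_right (by simp)).clm_apply contDiff_const

private lemma contDiff_pdt {f : ℝ × ℝ → ℝ} (hf : ContDiff ℝ ∞ f) : ContDiff ℝ ∞ (pdt f) :=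
  (hf.fderiv_right (by simp)).clm_apply contDiff_const

private lemma contDiff_pdxn {u : ℝ × ℝ → ℝ} (hu : ContDiff ℝ ∞ u) (k : ℕ) :
    ContDiff ℝ ∞ (pdxn u k) := by
  induction k with
  | zero => exact hu
  | succ k ih => exact contDiff_pdx ih

private lemma hasDerivAt_pdx {f : ℝ × ℝ → ℝ} (hf : ContDiff ℝ ∞ f) (x t : ℝ) :
    HasDerivAt (fun y => f (y, t)) (pdx f (x, t)) x := by
  have h1 : HasFDerivAt f (fderiv ℝ f (x, t)) (x, t) :=
    (hf.differentiable (by simp)).differentiableAt.hasFDerivAt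
  have h2 : HasDerivAt (fun y : ℝ => (y, t)) ((1:ℝ), (0:ℝ)) x :=
    (hasDerivAt_id x).prodMk (hasDerivAt_const x t)
  exact h1.comp_hasDerivAt x h2

private lemma hasDerivAt_pdt {f : ℝ × ℝ → ℝ} (hf : ContDiff ℝ ∞ f) (x t : ℝ) :
    HasDerivAt (fun s => f (x, s)) (pdt f (x, t)) t := by
  have h1 : HasFDerivAt f (fderiv ℝ f (x, t)) (x, t) :=
    (hf.differentiable (by simp)).differentiableAt.hasFDerivAt
  have h2 : HasDerivAt (fun s : ℝ => (x, s)) ((0:ℝ), (1:ℝ)) t :=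
    (hasDerivAt_const t x).prodMk (hasDerivAt_id t)
  exact h1.comp_hasDerivAt t h2

private lemma pdxn_eq {u : ℝ × ℝ → ℝ} (hu : ContDiff ℝ ∞ u) (k : ℕ) (x t : ℝ) :
    iteratedDeriv k (fun y => u (y, t)) x = pdxn u k (x, t) := by
  induction k generalizing x with
  | zero => simp [pdxn, iteratedDeriv_zero]
  | succ k ih =>
    rw [iteratedDeriv_succ]
    have : iteratedDeriv k (fun y => u (y, t)) = fun y => pdxn u k (y, t) :=
      funext fun y => ih y
    rw [this]
    exact (hasDerivAt_pdx (contDiff_pdxn hu k) x t).deriv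

private lemma pdt_eq {u : ℝ × ℝ → ℝ} (hu : ContDiff ℝ ∞ u) (x t : ℝ) :
    deriv (fun s => u (x, s)) t = pdt u (x, t) :=
  (hasDerivAt_pdt hu x t).deriv

private lemma contDiff_itd {f : ℝ → ℝ} (hf : ContDiff ℝ ∞ f) (k : ℕ) :
    ContDiff ℝ ∞ (iteratedDeriv k f) := by
  rw [iteratedDeriv_eq_iterate]
  exact hf.iterate_deriv k

private lemma hasDerivAt_itd {f : ℝ → ℝ} (hf : ContDiff ℝ ∞ f) (k : ℕ) (x : ℝ) :
    HasDerivAt (iteratedDeriv k f) (iteratedDeriv (k+1) f x) x := by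
  rw [iteratedDeriv_succ]
  exact ((contDiff_itd hf k).differentiable (by simp)).differentiableAt.hasDerivAt

private lemma itd_eventually_zero {f : ℝ → ℝ} {x : ℝ} (h : f =ᶠ[nhds x] fun _ => (0:ℝ))
    (k : ℕ) : iteratedDeriv k f x = 0 := by
  have H : ∀ k, iteratedDeriv k f =ᶠ[nhds x] fun _ => (0:ℝ) := by
    intro k
    induction k with
    | zero => simpa [iteratedDeriv_zero] using h
    | succ k ih =>
      rw [iteratedDeriv_succ]
      have := ih.deriv
      simpa using this
  exact (H k).eq_of_nhds

private lemma ftc_x1 (f₀ f₁ f₂ f₃ f₄ g₀ g₁ g₂ g₃ g₄ : ℝ → ℝ)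
    (hf0 : ∀ x, HasDerivAt f₀ (f₁ x) x) (hf1 : ∀ x, HasDerivAt f₁ (f₂ x) x)
    (hf2 : ∀ x, HasDerivAt f₂ (f₃ x) x) (hf3 : ∀ x, HasDerivAt f₃ (f₄ x) x)
    (hg0 : ∀ x, HasDerivAt g₀ (g₁ x) x) (hg1 : ∀ x, HasDerivAt g₁ (g₂ x) x)
    (hg2 : ∀ x, HasDerivAt g₂ (g₃ x) x) (hg3 : ∀ x, HasDerivAt g₃ (g₄ x) x)
    (hcont : Continuous fun x => f₄ x * f₀ x * g₀ x - f₂ x * f₂ x * g₀ x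
      + 2 * (f₁ x * f₁ x) * g₂ x - 1/2 * (f₀ x * f₀ x * g₄ x))
    (hz : ∀ x : ℝ, x = -1 ∨ x = 1 → g₀ x = 0 ∧ g₁ x = 0 ∧ g₂ x = 0 ∧ g₃ x = 0) :
    ∫ x in (-1:ℝ)..1, (f₄ x * f₀ x * g₀ x - f₂ x * f₂ x * g₀ x
      + 2 * (f₁ x * f₁ x) * g₂ x - 1/2 * (f₀ x * f₀ x * g₄ x)) = 0 := by
  have key : ∀ x ∈ uIcc (-1:ℝ) 1, HasDerivAt
      (fun y => f₃ y * f₀ y * g₀ y - f₂ y * f₁ y * g₀ y + f₁ y * f₁ y * g₁ y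
        - f₂ y * f₀ y * g₁ y + f₁ y * f₀ y * g₂ y - 1/2 * (f₀ y * f₀ y * g₃ y))
      (f₄ x * f₀ x * g₀ x - f₂ x * f₂ x * g₀ x
        + 2 * (f₁ x * f₁ x) * g₂ x - 1/2 * (f₀ x * f₀ x * g₄ x)) x := by
    intro x _
    have T1 := ((hf3 x).mul (hf0 x)).mul (hg0 x)
    have T2 := ((hf2 x).mul (hf1 x)).mul (hg0 x)
    have T3 := ((hf1 x).mul (hf1 x)).mul (hg1 x)
    have T4 := ((hf2 x).mul (hf0 x)).mul (hg1 x)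
    have T5 := ((hf1 x).mul (hf0 x)).mul (hg2 x)
    have T6 := (((hf0 x).mul (hf0 x)).mul (hg3 x)).const_mul (1/2 : ℝ)
    have H := ((((T1.sub T2).add T3).sub T4).add T5).sub T6
    refine H.congr_deriv ?_
    simp only [Pi.mul_apply]
    ring
  have h := intervalIntegral.integral_eq_sub_of_hasDerivAt key (hcont.intervalIntegrable _ _)
  rw [h]
  obtain ⟨a0, a1, a2, a3⟩ := hz 1 (Or.inr rfl)
  obtain ⟨b0, b1, b2, b3⟩ := hz (-1) (Or.inl rfl)
  simp [a0, a1, a2, a3, b0, b1, b2, b3]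

private lemma ftc_x2 (f₀ f₁ f₂ f₃ g₀ g₁ g₂ g₃ : ℝ → ℝ)
    (hf0 : ∀ x, HasDerivAt f₀ (f₁ x) x) (hf1 : ∀ x, HasDerivAt f₁ (f₂ x) x)
    (hf2 : ∀ x, HasDerivAt f₂ (f₃ x) x)
    (hg0 : ∀ x, HasDerivAt g₀ (g₁ x) x) (hg1 : ∀ x, HasDerivAt g₁ (g₂ x) x)
    (hg2 : ∀ x, HasDerivAt g₂ (g₃ x) x)
    (hcont : Continuous fun x => f₃ x * f₀ x * g₀ x - 3/2 * (f₁ x * f₁ x * g₁ x)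
      + 1/2 * (f₀ x * f₀ x * g₃ x))
    (hz : ∀ x : ℝ, x = -1 ∨ x = 1 → g₀ x = 0 ∧ g₁ x = 0 ∧ g₂ x = 0 ∧ g₃ x = 0) :
    ∫ x in (-1:ℝ)..1, (f₃ x * f₀ x * g₀ x - 3/2 * (f₁ x * f₁ x * g₁ x)
      + 1/2 * (f₀ x * f₀ x * g₃ x)) = 0 := by
  have key : ∀ x ∈ uIcc (-1:ℝ) 1, HasDerivAt
      (fun y => f₂ y * f₀ y * g₀ y - 1/2 * (f₁ y * f₁ y * g₀ y) - f₁ y * f₀ y * g₁ y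
        + 1/2 * (f₀ y * f₀ y * g₂ y))
      (f₃ x * f₀ x * g₀ x - 3/2 * (f₁ x * f₁ x * g₁ x) + 1/2 * (f₀ x * f₀ x * g₃ x)) x := by
    intro x _
    have T1 := ((hf2 x).mul (hf0 x)).mul (hg0 x)
    have T2 := (((hf1 x).mul (hf1 x)).mul (hg0 x)).const_mul (1/2 : ℝ)
    have T3 := ((hf1 x).mul (hf0 x)).mul (hg1 x)
    have T4 := (((hf0 x).mul (hf0 x)).mul (hg2 x)).const_mul (1/2 : ℝ)
    have H := ((T1.sub T2).sub T3).add T4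
    refine H.congr_deriv ?_
    simp only [Pi.mul_apply]
    ring
  have h := intervalIntegral.integral_eq_sub_of_hasDerivAt key (hcont.intervalIntegrable _ _)
  rw [h]
  obtain ⟨a0, a1, a2, a3⟩ := hz 1 (Or.inr rfl)
  obtain ⟨b0, b1, b2, b3⟩ := hz (-1) (Or.inl rfl)
  simp [a0, a1, a2, b0, b1, b2]

private def T0 : ℝ := 0 - ((3:ℝ)/4)^4
private def SS : Set (ℝ × ℝ) := Icc (-1:ℝ) 1 ×ˢ Icc T0 0

private lemma measurableSet_SS : MeasurableSet SS := measurableSet_Icc.prod measurableSet_Icc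

private lemma intOn_SS {F : ℝ × ℝ → ℝ} (hF : Continuous F) : IntegrableOn F SS :=
  hF.continuousOn.integrableOn_compact (isCompact_Icc.prod isCompact_Icc)

private lemma int_xt {F : ℝ × ℝ → ℝ} (hF : Continuous F) :
    ∫ p in SS, F p = ∫ x in Icc (-1:ℝ) 1, ∫ t in Icc T0 0, F (x, t) := by
  have h : IntegrableOn F (Icc (-1:ℝ) 1 ×ˢ Icc T0 0) (volume.prod volume) := by
    rw [← Measure.volume_eq_prod]; exact intOn_SS hF
  have := MeasureTheory.setIntegral_prod F h
  rw [SS, Measure.volume_eq_prod]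
  exact this

private lemma int_tx {F : ℝ × ℝ → ℝ} (hF : Continuous F) :
    ∫ p in SS, F p = ∫ t in Icc T0 0, ∫ x in Icc (-1:ℝ) 1, F (x, t) := by
  rw [int_xt hF]
  have h : Integrable (Function.uncurry fun x t => F (x, t))
      ((volume.restrict (Icc (-1:ℝ) 1)).prod (volume.restrict (Icc T0 0))) := by
    rw [Measure.prod_restrict, ← Measure.volume_eq_prod]
    exact intOn_SS hF
  exact MeasureTheory.integral_integral_swap h

private lemma icc_int (f : ℝ → ℝ) (a b : ℝ) (h : a ≤ b) :
    ∫ x in Icc a b, f x = ∫ x in a..b, f x := by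
  rw [MeasureTheory.integral_Icc_eq_integral_Ioc, intervalIntegral.integral_of_le h]

private def cc1 (β : ℝ) (ψ χ : ℝ → ℝ) : ℝ × ℝ → ℝ :=
  fun p => 1/2 * (ψ p.1 * deriv χ p.2)
    + (β * iteratedDeriv 3 ψ p.1 - iteratedDeriv 4 ψ p.1)/2 * χ p.2

private def cc2 (β : ℝ) (ψ χ : ℝ → ℝ) : ℝ × ℝ → ℝ :=
  fun p => (2 * iteratedDeriv 2 ψ p.1 - 3*β/2 * iteratedDeriv 1 ψ p.1) * χ p.2

private lemma cont_cc1 {β : ℝ} {ψ χ : ℝ → ℝ} (hψ : ContDiff ℝ ∞ ψ) (hχ : ContDiff ℝ ∞ χ) :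
    Continuous (cc1 β ψ χ) := by
  have h1 : Continuous (deriv χ) := hχ.continuous_deriv (by simp)
  have h3 := (contDiff_itd hψ 3).continuous
  have h4 := (contDiff_itd hψ 4).continuous
  have hψc := hψ.continuous
  have hχc := hχ.continuous
  unfold cc1
  fun_prop

private lemma cont_cc2 {β : ℝ} {ψ χ : ℝ → ℝ} (hψ : ContDiff ℝ ∞ ψ) (hχ : ContDiff ℝ ∞ χ) :
    Continuous (cc2 β ψ χ) := by
  have h1 := (contDiff_itd hψ 1).continuous
  have h2 := (contDiff_itd hψ 2).continuous
  have hχc := hχ.continuous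
  unfold cc2
  fun_prop

/-- combination whose `x`-integral vanishes (4th order part) -/
private def fA1 (u : ℝ × ℝ → ℝ) (ψ : ℝ → ℝ) : ℝ × ℝ → ℝ := fun p =>
  pdxn u 4 p * u p * ψ p.1 - pdxn u 2 p * pdxn u 2 p * ψ p.1
    + 2 * (pdxn u 1 p * pdxn u 1 p) * iteratedDeriv 2 ψ p.1
    - 1/2 * (u p * u p * iteratedDeriv 4 ψ p.1)

/-- combination whose `x`-integral vanishes (3rd order part) -/
private def fA2 (u : ℝ × ℝ → ℝ) (ψ : ℝ → ℝ) : ℝ × ℝ → ℝ := fun p =>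
  pdxn u 3 p * u p * ψ p.1 - 3/2 * (pdxn u 1 p * pdxn u 1 p * iteratedDeriv 1 ψ p.1)
    + 1/2 * (u p * u p * iteratedDeriv 3 ψ p.1)

/-- time-derivative part, whose integral is nonnegative -/
private def fG5 (u : ℝ × ℝ → ℝ) (ψ χ : ℝ → ℝ) : ℝ × ℝ → ℝ := fun p =>
  pdt u p * u p * (ψ p.1 * χ p.2) + 1/2 * (u p * u p * (ψ p.1 * deriv χ p.2))

private def fRm (β : ℝ) (u : ℝ × ℝ → ℝ) (ψ χ : ℝ → ℝ) : ℝ × ℝ → ℝ := fun p =>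
  pdxn u 2 p * pdxn u 2 p * (ψ p.1 * χ p.2)
    - (u p * u p * cc1 β ψ χ p + pdxn u 1 p * pdxn u 1 p * cc2 β ψ χ p)

private lemma core (β K : ℝ) (u : ℝ × ℝ → ℝ) (ψ χ : ℝ → ℝ)
    (hu : ContDiff ℝ ∞ u) (hψ : ContDiff ℝ ∞ ψ) (hχ : ContDiff ℝ ∞ χ)
    (hψ0 : EqOn ψ 0 (Ioo (-(7/10):ℝ) (7/10))ᶜ) (hψ1 : EqOn ψ 1 (Icc (-(5/8):ℝ) (5/8)))
    (hψm : ∀ x, ψ x ∈ Icc (0:ℝ) 1)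
    (hχ0 : EqOn χ 0 (Iic (-(3/10):ℝ))) (hχ1 : EqOn χ 1 (Ici (-(1/5):ℝ)))
    (hχm : ∀ x, χ x ∈ Icc (0:ℝ) 1)
    (hPDE : ∀ p ∈ biCyl (0:ℝ) 0 (3/4), pdt u p + pdxn u 4 p + β * pdxn u 3 p = 0)
    (hK : ∀ p ∈ SS, |cc1 β ψ χ p| ≤ K ∧ |cc2 β ψ χ p| ≤ K) :
    (∫ p in biCyl (0:ℝ) 0 (5/8), pdxn u 2 p * pdxn u 2 p)
      ≤ K * ((∫ p in biCyl (0:ℝ) 0 (3/4), u p * u p)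
          + ∫ p in biCyl (0:ℝ) 0 (3/4), pdxn u 1 p * pdxn u 1 p) := by
  -- continuity arsenal
  have hc0 : Continuous u := hu.continuous
  have hcv1 : Continuous (pdxn u 1) := (contDiff_pdxn hu 1).continuous
  have hcv2 : Continuous (pdxn u 2) := (contDiff_pdxn hu 2).continuous
  have hcv3 : Continuous (pdxn u 3) := (contDiff_pdxn hu 3).continuous
  have hcv4 : Continuous (pdxn u 4) := (contDiff_pdxn hu 4).continuous
  have hcw : Continuous (pdt u) := (contDiff_pdt hu).continuous
  have hcψ0 : Continuous ψ := hψ.continuous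
  have hcψ1 : Continuous (iteratedDeriv 1 ψ) := (contDiff_itd hψ 1).continuous
  have hcψ2 : Continuous (iteratedDeriv 2 ψ) := (contDiff_itd hψ 2).continuous
  have hcψ3 : Continuous (iteratedDeriv 3 ψ) := (contDiff_itd hψ 3).continuous
  have hcψ4 : Continuous (iteratedDeriv 4 ψ) := (contDiff_itd hψ 4).continuous
  have hcχ : Continuous χ := hχ.continuous
  have hcχ' : Continuous (deriv χ) := hχ.continuous_deriv (by simp)
  have hcc1 : Continuous (cc1 β ψ χ) := cont_cc1 hψ hχ
  have hcc2 : Continuous (cc2 β ψ χ) := cont_cc2 hψ hχ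
  have hcA1 : Continuous (fA1 u ψ) := by unfold fA1; fun_prop
  have hcA2 : Continuous (fA2 u ψ) := by unfold fA2; fun_prop
  have hcG5 : Continuous (fG5 u ψ χ) := by unfold fG5; fun_prop
  have hcRm : Continuous (fRm β u ψ χ) := by unfold fRm; fun_prop
  have hcV2φ : Continuous (fun p : ℝ × ℝ => pdxn u 2 p * pdxn u 2 p * (ψ p.1 * χ p.2)) := by
    fun_prop
  have hcRHS : Continuous (fun p : ℝ × ℝ => u p * u p * cc1 β ψ χ p
      + pdxn u 1 p * pdxn u 1 p * cc2 β ψ χ p) := by fun_prop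
  have hcχA1 : Continuous (fun p : ℝ × ℝ => χ p.2 * fA1 u ψ p) := hcχ.comp continuous_snd |>.mul hcA1
  have hcχA2pre : Continuous (fun p : ℝ × ℝ => χ p.2 * fA2 u ψ p) :=
    (hcχ.comp continuous_snd).mul hcA2
  have hcχA2 : Continuous (fun p : ℝ × ℝ => β * (χ p.2 * fA2 u ψ p)) :=
    continuous_const.mul hcχA2pre
  have hcK2 : Continuous (fun p : ℝ × ℝ => u p * u p * K + pdxn u 1 p * pdxn u 1 p * K) := by
    fun_prop
  -- derivative arsenal
  have hDx : ∀ (k : ℕ) (x t : ℝ), HasDerivAt (fun y => pdxn u k (y, t)) (pdxn u (k+1) (x, t)) x :=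
    fun k x t => hasDerivAt_pdx (contDiff_pdxn hu k) x t
  have hDt : ∀ x t : ℝ, HasDerivAt (fun s => u (x, s)) (pdt u (x, t)) t := hasDerivAt_pdt hu
  have hDψ : ∀ (k : ℕ) (x : ℝ), HasDerivAt (iteratedDeriv k ψ) (iteratedDeriv (k+1) ψ x) x :=
    fun k x => hasDerivAt_itd hψ k x
  have hDψ0 : ∀ x : ℝ, HasDerivAt ψ (iteratedDeriv 1 ψ x) x := fun x => by
    have h := hDψ 0 x; rwa [iteratedDeriv_zero] at h
  have hDχ : ∀ t : ℝ, HasDerivAt χ (deriv χ t) t :=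
    fun t => ((hχ.differentiable (by simp)) t).hasDerivAt
  -- vanishing facts
  have hψz : ∀ (k : ℕ) (x : ℝ), (x < -(7/10) ∨ (7/10:ℝ) < x) → iteratedDeriv k ψ x = 0 := by
    intro k x hx
    apply itd_eventually_zero _ k
    have hU : (Iio (-(7/10):ℝ) ∪ Ioi (7/10)) ∈ nhds x :=
      (isOpen_Iio.union isOpen_Ioi).mem_nhds (by rcases hx with h | h; exacts [Or.inl h, Or.inr h])
    filter_upwards [hU] with y hy
    have hyc : y ∈ (Ioo (-(7/10):ℝ) (7/10))ᶜ := by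
      simp only [mem_compl_iff, mem_Ioo, not_and, not_lt]
      intro h1
      rcases hy with h | h
      · simp only [mem_Iio] at h; linarith
      · simp only [mem_Ioi] at h; linarith
    simpa using hψ0 hyc
  have hψzz : ∀ x : ℝ, (x < -(7/10) ∨ (7/10:ℝ) < x) → ψ x = 0 := by
    intro x hx
    have h := hψz 0 x hx
    rwa [iteratedDeriv_zero] at h
  have hχz : ∀ t : ℝ, t ≤ -(3/10) → χ t = 0 := fun t ht => hχ0 ht
  have hχ'z : ∀ t : ℝ, t < -(3/10) → deriv χ t = 0 := by
    intro t ht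
    have hev : χ =ᶠ[nhds t] fun _ => (0:ℝ) := by
      filter_upwards [Iio_mem_nhds ht] with y hy
      simpa using hχ0 (mem_Iic.mpr (le_of_lt (mem_Iio.mp hy)))
    rw [hev.deriv_eq]
    simp
  have hT0 : T0 < -(3/10) := by norm_num [T0]
  have hT0le : T0 ≤ (0:ℝ) := by norm_num [T0]
  -- set facts
  have hm34 : MeasurableSet (biCyl (0:ℝ) 0 (3/4)) := measurableSet_Ioo.prod measurableSet_Ioc
  have hm58 : MeasurableSet (biCyl (0:ℝ) 0 (5/8)) := measurableSet_Ioo.prod measurableSet_Ioc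
  have hsub34 : biCyl (0:ℝ) 0 (3/4) ⊆ SS := by
    rintro ⟨x, t⟩ ⟨hx, ht⟩
    exact ⟨⟨by linarith [hx.1], by linarith [hx.2]⟩, ⟨le_of_lt ht.1, ht.2⟩⟩
  have hsub58 : biCyl (0:ℝ) 0 (5/8) ⊆ SS := by
    rintro ⟨x, t⟩ ⟨hx, ht⟩
    have h58 : T0 < (0:ℝ) - (5/8)^4 := by norm_num [T0]
    exact ⟨⟨by linarith [hx.1], by linarith [hx.2]⟩, ⟨by linarith [ht.1], ht.2⟩⟩
  -- FTC in x
  have hbz : ∀ x : ℝ, x = -1 ∨ x = 1 → ψ x = 0 ∧ iteratedDeriv 1 ψ x = 0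
      ∧ iteratedDeriv 2 ψ x = 0 ∧ iteratedDeriv 3 ψ x = 0 := by
    intro x hx
    have hx' : x < -(7/10) ∨ (7/10:ℝ) < x := by
      rcases hx with h | h <;> rw [h] <;> norm_num
    exact ⟨hψzz x hx', hψz 1 x hx', hψz 2 x hx', hψz 3 x hx'⟩
  have hE1 : ∀ t : ℝ, (∫ x in Icc (-1:ℝ) 1, fA1 u ψ (x, t)) = 0 := by
    intro t
    rw [icc_int _ _ _ (by norm_num : (-1:ℝ) ≤ 1)]
    exact ftc_x1 (fun y => u (y, t)) (fun y => pdxn u 1 (y, t)) (fun y => pdxn u 2 (y, t))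
      (fun y => pdxn u 3 (y, t)) (fun y => pdxn u 4 (y, t))
      ψ (iteratedDeriv 1 ψ) (iteratedDeriv 2 ψ) (iteratedDeriv 3 ψ) (iteratedDeriv 4 ψ)
      (fun x => hDx 0 x t) (fun x => hDx 1 x t) (fun x => hDx 2 x t) (fun x => hDx 3 x t)
      hDψ0 (hDψ 1) (hDψ 2) (hDψ 3)
      (hcA1.comp (continuous_id.prodMk continuous_const))
      hbz
  have hE2 : ∀ t : ℝ, (∫ x in Icc (-1:ℝ) 1, fA2 u ψ (x, t)) = 0 := by
    intro t
    rw [icc_int _ _ _ (by norm_num : (-1:ℝ) ≤ 1)]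
    exact ftc_x2 (fun y => u (y, t)) (fun y => pdxn u 1 (y, t)) (fun y => pdxn u 2 (y, t))
      (fun y => pdxn u 3 (y, t))
      ψ (iteratedDeriv 1 ψ) (iteratedDeriv 2 ψ) (iteratedDeriv 3 ψ)
      (fun x => hDx 0 x t) (fun x => hDx 1 x t) (fun x => hDx 2 x t)
      hDψ0 (hDψ 1) (hDψ 2)
      (hcA2.comp (continuous_id.prodMk continuous_const))
      hbz
  have hA1SS : ∫ p in SS, χ p.2 * fA1 u ψ p = 0 := by
    have h0 : ∀ t : ℝ, (∫ x in Icc (-1:ℝ) 1, χ t * fA1 u ψ (x, t)) = 0 := by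
      intro t
      rw [MeasureTheory.integral_const_mul, hE1 t, mul_zero]
    rw [int_tx hcχA1]
    calc (∫ t in Icc T0 0, ∫ x in Icc (-1:ℝ) 1, χ t * fA1 u ψ (x, t))
        = ∫ t in Icc T0 0, (fun _ => (0:ℝ)) t :=
          setIntegral_congr_fun measurableSet_Icc (fun t _ => h0 t)
      _ = 0 := by simp
  have hA2SS : ∫ p in SS, χ p.2 * fA2 u ψ p = 0 := by
    have h0 : ∀ t : ℝ, (∫ x in Icc (-1:ℝ) 1, χ t * fA2 u ψ (x, t)) = 0 := by
      intro t
      rw [MeasureTheory.integral_const_mul, hE2 t, mul_zero]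
    rw [int_tx hcχA2pre]
    calc (∫ t in Icc T0 0, ∫ x in Icc (-1:ℝ) 1, χ t * fA2 u ψ (x, t))
        = ∫ t in Icc T0 0, (fun _ => (0:ℝ)) t :=
          setIntegral_congr_fun measurableSet_Icc (fun t _ => h0 t)
      _ = 0 := by simp
  -- FTC in t : nonnegativity
  have hG5nn : 0 ≤ ∫ p in SS, fG5 u ψ χ p := by
    rw [int_xt hcG5]
    apply setIntegral_nonneg measurableSet_Icc
    intro x _
    have key : ∀ t ∈ uIcc T0 (0:ℝ),
        HasDerivAt (fun s => 1/2 * (u (x, s) * u (x, s) * (ψ x * χ s))) (fG5 u ψ χ (x, t)) t := by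
      intro t _
      have H := (((hDt x t).mul (hDt x t)).mul ((hDχ t).const_mul (ψ x))).const_mul (1/2 : ℝ)
      refine H.congr_deriv ?_
      simp only [fG5, Pi.mul_apply]
      ring
    have hgc : Continuous fun t => fG5 u ψ χ (x, t) :=
      hcG5.comp (continuous_const.prodMk continuous_id)
    have hftc : (∫ t in Icc T0 0, fG5 u ψ χ (x, t))
        = 1/2 * (u (x, 0) * u (x, 0) * (ψ x * χ 0))
          - 1/2 * (u (x, T0) * u (x, T0) * (ψ x * χ T0)) := by
      rw [icc_int _ _ _ hT0le]
      exact integral_eq_sub_of_hasDerivAt key (hgc.intervalIntegrable _ _)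
    show (0:ℝ) ≤ ∫ t in Icc T0 0, fG5 u ψ χ (x, t)
    rw [hftc, hχz T0 (le_of_lt hT0)]
    have h1 : 0 ≤ ψ x := (hψm x).1
    have h2 : 0 ≤ χ 0 := (hχm 0).1
    have h4 : 0 ≤ u (x, 0) * u (x, 0) * (ψ x * χ 0) :=
      mul_nonneg (mul_self_nonneg _) (mul_nonneg h1 h2)
    nlinarith [h4]
  -- pointwise identity and master equation
  have hzero : ∫ p in SS, (fG5 u ψ χ p + χ p.2 * fA1 u ψ p + β * (χ p.2 * fA2 u ψ p)
      + fRm β u ψ χ p) = 0 := by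
    have hEq : EqOn (fun p : ℝ × ℝ => fG5 u ψ χ p + χ p.2 * fA1 u ψ p
        + β * (χ p.2 * fA2 u ψ p) + fRm β u ψ χ p) (fun _ => (0:ℝ)) SS := by
      intro p hp
      have hfac : (pdt u p + pdxn u 4 p + β * pdxn u 3 p) * (u p * (ψ p.1 * χ p.2)) = 0 := by
        rcases em (p.1 ∈ Ioo ((0:ℝ) - 3/4) ((0:ℝ) + 3/4)) with hx | hx
        · rcases em ((-(3/10):ℝ) < p.2) with ht | ht
          · have hpQ : p ∈ biCyl (0:ℝ) 0 (3/4) := by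
              refine ⟨hx, ⟨?_, hp.2.2⟩⟩
              have : (0:ℝ) - (3/4)^4 < -(3/10) := by norm_num
              linarith
            rw [hPDE p hpQ, zero_mul]
          · have hc : χ p.2 = 0 := hχz p.2 (not_lt.mp ht)
            rw [hc]; ring
        · have hxx : p.1 < -(7/10) ∨ (7/10:ℝ) < p.1 := by
            simp only [mem_Ioo, not_and, not_lt] at hx
            by_cases h : (0:ℝ) - 3/4 < p.1
            · right; have := hx h; linarith
            · left; push_neg at h; linarith
          have hps : ψ p.1 = 0 := hψzz p.1 hxx
          rw [hps]; ring
      simp only [fG5, fA1, fA2, fRm, cc1, cc2]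
      linear_combination hfac
    calc ∫ p in SS, (fG5 u ψ χ p + χ p.2 * fA1 u ψ p + β * (χ p.2 * fA2 u ψ p) + fRm β u ψ χ p)
        = ∫ p in SS, (fun _ => (0:ℝ)) p := setIntegral_congr_fun measurableSet_SS hEq
      _ = 0 := by simp
  have hIG5 := intOn_SS hcG5
  have hIχA1 := intOn_SS hcχA1
  have hIχA2 := intOn_SS hcχA2
  have hIRm := intOn_SS hcRm
  have hIV2φ := intOn_SS hcV2φ
  have hIRHS := intOn_SS hcRHS
  have hInt12 : IntegrableOn (fun p : ℝ × ℝ => fG5 u ψ χ p + χ p.2 * fA1 u ψ p) SS :=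
    hIG5.add hIχA1
  have hInt123 : IntegrableOn (fun p : ℝ × ℝ => fG5 u ψ χ p + χ p.2 * fA1 u ψ p
      + β * (χ p.2 * fA2 u ψ p)) SS := hInt12.add hIχA2
  have hs1 : ∫ p in SS, (fG5 u ψ χ p + χ p.2 * fA1 u ψ p + β * (χ p.2 * fA2 u ψ p)
        + fRm β u ψ χ p)
      = (∫ p in SS, (fG5 u ψ χ p + χ p.2 * fA1 u ψ p + β * (χ p.2 * fA2 u ψ p)))
        + ∫ p in SS, fRm β u ψ χ p := integral_add hInt123 hIRm
  have hs2 : ∫ p in SS, (fG5 u ψ χ p + χ p.2 * fA1 u ψ p + β * (χ p.2 * fA2 u ψ p))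
      = (∫ p in SS, (fG5 u ψ χ p + χ p.2 * fA1 u ψ p))
        + ∫ p in SS, β * (χ p.2 * fA2 u ψ p) := integral_add hInt12 hIχA2
  have hs3 : ∫ p in SS, (fG5 u ψ χ p + χ p.2 * fA1 u ψ p)
      = (∫ p in SS, fG5 u ψ χ p) + ∫ p in SS, χ p.2 * fA1 u ψ p := integral_add hIG5 hIχA1
  have hβA2 : ∫ p in SS, β * (χ p.2 * fA2 u ψ p) = 0 := by
    rw [MeasureTheory.integral_const_mul, hA2SS, mul_zero]
  have hRmsplit : ∫ p in SS, fRm β u ψ χ p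
      = (∫ p in SS, pdxn u 2 p * pdxn u 2 p * (ψ p.1 * χ p.2))
        - ∫ p in SS, (u p * u p * cc1 β ψ χ p + pdxn u 1 p * pdxn u 1 p * cc2 β ψ χ p) := by
    unfold fRm
    exact integral_sub hIV2φ hIRHS
  have hmain : (∫ p in SS, pdxn u 2 p * pdxn u 2 p * (ψ p.1 * χ p.2))
      ≤ ∫ p in SS, (u p * u p * cc1 β ψ χ p + pdxn u 1 p * pdxn u 1 p * cc2 β ψ χ p) := by
    linarith [hzero, hs1, hs2, hs3, hβA2, hA1SS, hG5nn, hRmsplit]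
  -- restrict the right-hand side to Q_{3/4}
  have hdz : ∫ p in SS \ biCyl (0:ℝ) 0 (3/4),
      (u p * u p * cc1 β ψ χ p + pdxn u 1 p * pdxn u 1 p * cc2 β ψ χ p) = 0 := by
    have hEq : EqOn (fun p : ℝ × ℝ => u p * u p * cc1 β ψ χ p
        + pdxn u 1 p * pdxn u 1 p * cc2 β ψ χ p) (fun _ => (0:ℝ))
        (SS \ biCyl (0:ℝ) 0 (3/4)) := by
      rintro p ⟨hpS, hpn⟩
      rcases em (p.1 ∈ Ioo ((0:ℝ) - 3/4) ((0:ℝ) + 3/4)) with hx | hx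
      · have htn : ¬ ((0:ℝ) - (3/4)^4 < p.2 ∧ p.2 ≤ 0) := fun hc => hpn ⟨hx, hc⟩
        have ht2 : p.2 ≤ (0:ℝ) - (3/4)^4 := by
          by_contra hlt
          push_neg at hlt
          exact htn ⟨hlt, hpS.2.2⟩
        have hlt3 : (0:ℝ) - (3/4)^4 < -(3/10) := by norm_num
        have h1 : χ p.2 = 0 := hχz p.2 (by linarith)
        have h2 : deriv χ p.2 = 0 := hχ'z p.2 (by linarith)
        simp only [cc1, cc2]
        rw [h1, h2]
        ring
      · have hxx : p.1 < -(7/10) ∨ (7/10:ℝ) < p.1 := by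
          simp only [mem_Ioo, not_and, not_lt] at hx
          by_cases h : (0:ℝ) - 3/4 < p.1
          · right; have := hx h; linarith
          · left; push_neg at h; linarith
        simp only [cc1, cc2]
        rw [hψzz p.1 hxx, hψz 1 p.1 hxx, hψz 2 p.1 hxx, hψz 3 p.1 hxx, hψz 4 p.1 hxx]
        ring
    calc ∫ p in SS \ biCyl (0:ℝ) 0 (3/4),
          (u p * u p * cc1 β ψ χ p + pdxn u 1 p * pdxn u 1 p * cc2 β ψ χ p)
        = ∫ p in SS \ biCyl (0:ℝ) 0 (3/4), (fun _ => (0:ℝ)) p :=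
          setIntegral_congr_fun (measurableSet_SS.diff hm34) hEq
      _ = 0 := by simp
  have hRHS34 : ∫ p in SS, (u p * u p * cc1 β ψ χ p + pdxn u 1 p * pdxn u 1 p * cc2 β ψ χ p)
      = ∫ p in biCyl (0:ℝ) 0 (3/4),
          (u p * u p * cc1 β ψ χ p + pdxn u 1 p * pdxn u 1 p * cc2 β ψ χ p) := by
    have hu2 : biCyl (0:ℝ) 0 (3/4) ∪ (SS \ biCyl (0:ℝ) 0 (3/4)) = SS :=
      union_diff_cancel hsub34
    calc ∫ p in SS, (u p * u p * cc1 β ψ χ p + pdxn u 1 p * pdxn u 1 p * cc2 β ψ χ p)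
        = ∫ p in biCyl (0:ℝ) 0 (3/4) ∪ (SS \ biCyl (0:ℝ) 0 (3/4)),
            (u p * u p * cc1 β ψ χ p + pdxn u 1 p * pdxn u 1 p * cc2 β ψ χ p) := by rw [hu2]
      _ = (∫ p in biCyl (0:ℝ) 0 (3/4),
            (u p * u p * cc1 β ψ χ p + pdxn u 1 p * pdxn u 1 p * cc2 β ψ χ p))
          + ∫ p in SS \ biCyl (0:ℝ) 0 (3/4),
            (u p * u p * cc1 β ψ χ p + pdxn u 1 p * pdxn u 1 p * cc2 β ψ χ p) :=
          setIntegral_union disjoint_sdiff_self_right (measurableSet_SS.diff hm34)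
            (hIRHS.mono_set hsub34) (hIRHS.mono_set diff_subset)
      _ = ∫ p in biCyl (0:ℝ) 0 (3/4),
            (u p * u p * cc1 β ψ χ p + pdxn u 1 p * pdxn u 1 p * cc2 β ψ χ p) := by
          rw [hdz, add_zero]
  have hmono : ∫ p in biCyl (0:ℝ) 0 (3/4),
        (u p * u p * cc1 β ψ χ p + pdxn u 1 p * pdxn u 1 p * cc2 β ψ χ p)
      ≤ ∫ p in biCyl (0:ℝ) 0 (3/4), (u p * u p * K + pdxn u 1 p * pdxn u 1 p * K) := by
    apply setIntegral_mono_on (hIRHS.mono_set hsub34) ((intOn_SS hcK2).mono_set hsub34) hm34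
    intro p hp
    obtain ⟨hk1, hk2⟩ := hK p (hsub34 hp)
    have e1 : u p * u p * cc1 β ψ χ p ≤ u p * u p * K :=
      mul_le_mul_of_nonneg_left (le_trans (le_abs_self _) hk1) (mul_self_nonneg _)
    have e2 : pdxn u 1 p * pdxn u 1 p * cc2 β ψ χ p ≤ pdxn u 1 p * pdxn u 1 p * K :=
      mul_le_mul_of_nonneg_left (le_trans (le_abs_self _) hk2) (mul_self_nonneg _)
    linarith
  have hfinsplit : ∫ p in biCyl (0:ℝ) 0 (3/4), (u p * u p * K + pdxn u 1 p * pdxn u 1 p * K)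
      = (∫ p in biCyl (0:ℝ) 0 (3/4), u p * u p) * K
        + (∫ p in biCyl (0:ℝ) 0 (3/4), pdxn u 1 p * pdxn u 1 p) * K := by
    rw [integral_add (((intOn_SS (by fun_prop : Continuous fun p : ℝ × ℝ => u p * u p * K)).mono_set hsub34))
      (((intOn_SS (by fun_prop : Continuous fun p : ℝ × ℝ => pdxn u 1 p * pdxn u 1 p * K)).mono_set hsub34)),
      MeasureTheory.integral_mul_const, MeasureTheory.integral_mul_const]
  -- left-hand side
  have hL1 : ∫ p in biCyl (0:ℝ) 0 (5/8), pdxn u 2 p * pdxn u 2 p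
      = ∫ p in biCyl (0:ℝ) 0 (5/8), pdxn u 2 p * pdxn u 2 p * (ψ p.1 * χ p.2) := by
    apply setIntegral_congr_fun hm58
    rintro ⟨x, t⟩ ⟨hx, ht⟩
    have h1 : ψ x = 1 := hψ1 ⟨by linarith [hx.1], by linarith [hx.2]⟩
    have h58 : -(1/5:ℝ) < (0:ℝ) - (5/8)^4 := by norm_num
    have h2 : χ t = 1 := hχ1 (by show -(1/5:ℝ) ≤ t; linarith [ht.1])
    show pdxn u 2 (x, t) * pdxn u 2 (x, t)
      = pdxn u 2 (x, t) * pdxn u 2 (x, t) * (ψ x * χ t)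
    rw [h1, h2]
    ring
  have hL2 : ∫ p in biCyl (0:ℝ) 0 (5/8), pdxn u 2 p * pdxn u 2 p * (ψ p.1 * χ p.2)
      ≤ ∫ p in SS, pdxn u 2 p * pdxn u 2 p * (ψ p.1 * χ p.2) := by
    apply setIntegral_mono_set hIV2φ
    · apply ae_of_all
      intro p
      exact mul_nonneg (mul_self_nonneg _) (mul_nonneg (hψm p.1).1 (hχm p.2).1)
    · exact HasSubset.Subset.eventuallyLE hsub58
  calc ∫ p in biCyl (0:ℝ) 0 (5/8), pdxn u 2 p * pdxn u 2 p
      = ∫ p in biCyl (0:ℝ) 0 (5/8), pdxn u 2 p * pdxn u 2 p * (ψ p.1 * χ p.2) := hL1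
    _ ≤ ∫ p in SS, pdxn u 2 p * pdxn u 2 p * (ψ p.1 * χ p.2) := hL2
    _ ≤ ∫ p in SS, (u p * u p * cc1 β ψ χ p + pdxn u 1 p * pdxn u 1 p * cc2 β ψ χ p) := hmain
    _ = ∫ p in biCyl (0:ℝ) 0 (3/4),
          (u p * u p * cc1 β ψ χ p + pdxn u 1 p * pdxn u 1 p * cc2 β ψ χ p) := hRHS34
    _ ≤ ∫ p in biCyl (0:ℝ) 0 (3/4), (u p * u p * K + pdxn u 1 p * pdxn u 1 p * K) := hmono
    _ = (∫ p in biCyl (0:ℝ) 0 (3/4), u p * u p) * K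
        + (∫ p in biCyl (0:ℝ) 0 (3/4), pdxn u 1 p * pdxn u 1 p) * K := hfinsplit
    _ = K * ((∫ p in biCyl (0:ℝ) 0 (3/4), u p * u p)
        + ∫ p in biCyl (0:ℝ) 0 (3/4), pdxn u 1 p * pdxn u 1 p) := by ring

end CaccAux

/-- Caccioppoli-type estimate for smooth solutions of the linear equation
`u_t + u_{xxxx} + β u_{xxx} = 0` on `Q_{3/4}`:
`‖u_{xx}‖_{L²(Q_{5/8})} ≤ C_β (‖u‖_{L²(Q_{3/4})} + ‖u_x‖_{L²(Q_{3/4})})`. -/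
theorem caccioppoli_linear_equation (β : ℝ) :
    ∃ C : ℝ, 0 < C ∧ ∀ u : ℝ × ℝ → ℝ, ContDiff ℝ (⊤ : ℕ∞) u →
      (∀ p ∈ biCyl (0:ℝ) 0 (3/4),
        deriv (fun s => u (p.1, s)) p.2
          + iteratedDeriv 4 (fun y => u (y, p.2)) p.1
          + β * iteratedDeriv 3 (fun y => u (y, p.2)) p.1 = 0) →
      (∫ p in biCyl (0:ℝ) 0 (5/8), (iteratedDeriv 2 (fun y => u (y, p.2)) p.1)^2) ^ ((1:ℝ)/2)
        ≤ C * ((∫ p in biCyl (0:ℝ) 0 (3/4), (u p)^2) ^ ((1:ℝ)/2)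
            + (∫ p in biCyl (0:ℝ) 0 (3/4), (iteratedDeriv 1 (fun y => u (y, p.2)) p.1)^2) ^ ((1:ℝ)/2)) := by
  classical
  obtain ⟨ψ, hψ, hψ0, hψ1, hψm⟩ := exists_cutoff (Ioo (-(7/10):ℝ) (7/10))ᶜ
    (Icc (-(5/8):ℝ) (5/8)) isOpen_Ioo.isClosed_compl isClosed_Icc
    (disjoint_compl_left.mono_right (Icc_subset_Ioo (by norm_num) (by norm_num)))
  obtain ⟨χ, hχ, hχ0, hχ1, hχm⟩ := exists_cutoff (Iic (-(3/10):ℝ)) (Ici (-(1/5):ℝ))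
    isClosed_Iic isClosed_Ici
    (Set.disjoint_left.mpr (fun x hx hx' => by
      simp only [mem_Iic, mem_Ici] at hx hx'; linarith))
  have hc1 : Continuous (cc1 β ψ χ) := by
    have h1 : Continuous (deriv χ) := hχ.continuous_deriv (by simp)
    have h3 := (contDiff_itd hψ 3).continuous
    have h4 := (contDiff_itd hψ 4).continuous
    have hψc := hψ.continuous
    have hχc := hχ.continuous
    unfold cc1
    fun_prop
  have hc2 : Continuous (cc2 β ψ χ) := by
    have h1 := (contDiff_itd hψ 1).continuous
    have h2 := (contDiff_itd hψ 2).continuous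
    have hχc := hχ.continuous
    unfold cc2
    fun_prop
  obtain ⟨K₁, hK₁⟩ :=
    (isCompact_Icc.prod isCompact_Icc).exists_bound_of_continuousOn hc1.continuousOn
  obtain ⟨K₂, hK₂⟩ :=
    (isCompact_Icc.prod isCompact_Icc).exists_bound_of_continuousOn hc2.continuousOn
  set K := max 1 (max K₁ K₂) with hKdef
  have hKpos : (0:ℝ) < K := lt_of_lt_of_le one_pos (le_max_left _ _)
  refine ⟨Real.sqrt K, Real.sqrt_pos.mpr hKpos, ?_⟩
  intro u huω hpde
  have hu : ContDiff ℝ ∞ u := huω.of_le (by simp)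
  have h2 : (fun p : ℝ × ℝ => (iteratedDeriv 2 (fun y => u (y, p.2)) p.1)^2)
      = fun p => pdxn u 2 p * pdxn u 2 p := funext fun p => by
    rw [show iteratedDeriv 2 (fun y => u (y, p.2)) p.1 = pdxn u 2 p from pdxn_eq hu 2 p.1 p.2]
    ring
  have h0 : (fun p : ℝ × ℝ => (u p)^2) = fun p => u p * u p := funext fun p => by ring
  have h1 : (fun p : ℝ × ℝ => (iteratedDeriv 1 (fun y => u (y, p.2)) p.1)^2)
      = fun p => pdxn u 1 p * pdxn u 1 p := funext fun p => by
    rw [show iteratedDeriv 1 (fun y => u (y, p.2)) p.1 = pdxn u 1 p from pdxn_eq hu 1 p.1 p.2]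
    ring
  rw [h2, h0, h1]
  have hPDE' : ∀ p ∈ biCyl (0:ℝ) 0 (3/4), pdt u p + pdxn u 4 p + β * pdxn u 3 p = 0 := by
    intro p hp
    have h := hpde p hp
    rwa [show deriv (fun s => u (p.1, s)) p.2 = pdt u p from pdt_eq hu p.1 p.2,
      show iteratedDeriv 4 (fun y => u (y, p.2)) p.1 = pdxn u 4 p from pdxn_eq hu 4 p.1 p.2,
      show iteratedDeriv 3 (fun y => u (y, p.2)) p.1 = pdxn u 3 p from pdxn_eq hu 3 p.1 p.2] at h
  have hKK : ∀ p ∈ SS, |cc1 β ψ χ p| ≤ K ∧ |cc2 β ψ χ p| ≤ K := by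
    intro p hp
    constructor
    · calc |cc1 β ψ χ p| = ‖cc1 β ψ χ p‖ := (Real.norm_eq_abs _).symm
        _ ≤ K₁ := hK₁ p hp
        _ ≤ K := le_trans (le_max_left _ _) (le_max_right _ _)
    · calc |cc2 β ψ χ p| = ‖cc2 β ψ χ p‖ := (Real.norm_eq_abs _).symm
        _ ≤ K₂ := hK₂ p hp
        _ ≤ K := le_trans (le_max_right _ _) (le_max_right _ _)
  have hcore := core β K u ψ χ hu hψ hχ hψ0 hψ1 hψm hχ0 hχ1 hχm hPDE' hKK
  set X := ∫ p in biCyl (0:ℝ) 0 (5/8), pdxn u 2 p * pdxn u 2 p with hXdef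
  set A := ∫ p in biCyl (0:ℝ) 0 (3/4), u p * u p with hAdef
  set B := ∫ p in biCyl (0:ℝ) 0 (3/4), pdxn u 1 p * pdxn u 1 p with hBdef
  have hA0 : 0 ≤ A := setIntegral_nonneg (measurableSet_Ioo.prod measurableSet_Ioc)
    fun p _ => mul_self_nonneg _
  have hB0 : 0 ≤ B := setIntegral_nonneg (measurableSet_Ioo.prod measurableSet_Ioc)
    fun p _ => mul_self_nonneg _
  rw [← Real.sqrt_eq_rpow, ← Real.sqrt_eq_rpow, ← Real.sqrt_eq_rpow]
  have hsum : Real.sqrt (A + B) ≤ Real.sqrt A + Real.sqrt B := by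
    have hsq : A + B ≤ (Real.sqrt A + Real.sqrt B)^2 := by
      have hA := Real.sq_sqrt hA0
      have hB := Real.sq_sqrt hB0
      nlinarith [Real.sqrt_nonneg A, Real.sqrt_nonneg B]
    calc Real.sqrt (A + B) ≤ Real.sqrt ((Real.sqrt A + Real.sqrt B)^2) :=
          Real.sqrt_le_sqrt hsq
      _ = Real.sqrt A + Real.sqrt B := Real.sqrt_sq (by positivity)
  calc Real.sqrt X ≤ Real.sqrt (K * (A + B)) := Real.sqrt_le_sqrt hcore
    _ = Real.sqrt K * Real.sqrt (A + B) := Real.sqrt_mul hKpos.le _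
    _ ≤ Real.sqrt K * (Real.sqrt A + Real.sqrt B) :=
        mul_le_mul_of_nonneg_left hsum (Real.sqrt_nonneg _)
end
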